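/- For any a > 4 and ε > 0, the signed measure μ = δ_0 − 3δ_ε + 3δ_{2ε} − δ_{3ε} on ℝ has interaction energy E_{a,2}[μ] = (ε^a/a)(−15 + 6·2^a − 3^a) for the potential W_{a,2}(x) = |x|^a/a − |x|^2/2, and this quantity is negative; moreover it equals zero when a = 4. -/

import Mathlib

/-!
Since `W_{a,2}` is even, the energy of `δ_0 - 3δ_ε + 3δ_{2ε} - δ_{3ε}` is the combination
`10 W(0) - 15 W(ε) + 6 W(2ε) - W(3ε)` of values of `W`. This combination kills the quadratic
part of `W_{a,2}` and scales the homogeneous part `|x|^a/a` by `-15 + 6·2^a - 3^a`, which vanishes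
at `a = 4`; beyond `4` the function `6·2^a - 3^a` decreases, because
`3^a log 3 = (3/2)^a·2^a log 3 > 5·2^a log 3 > 6·2^a log 2` there (using `2^6 < 3^5`).
-/

open Finset

noncomputable section

/-- The potential `W_{a,2}(x) = |x|^a/a - |x|^2/2` on `ℝ`. -/
def Wa2 (a x : ℝ) : ℝ := |x| ^ a / a - |x| ^ (2:ℝ) / 2

/-- The interaction energy `E[μ] = (1/2)∑ᵢ∑ⱼ wᵢ wⱼ W(pᵢ - pⱼ)` of a linear
combination of Dirac masses `μ = ∑ᵢ wᵢ δ_{pᵢ}`. -/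
def diracEnergy {n : ℕ} (W : ℝ → ℝ) (w p : Fin n → ℝ) : ℝ :=
  (1 / 2) * ∑ i, ∑ j, w i * w j * W (p i - p j)

theorem diracEnergy_fourth_difference {W : ℝ → ℝ} (hW : Function.Even W) (ε : ℝ) :
    diracEnergy W ![1, -3, 3, -1] ![0, ε, 2 * ε, 3 * ε]
      = 10 * W 0 - 15 * W ε + 6 * W (2 * ε) - W (3 * ε) := by
  simp only [diracEnergy, Fin.sum_univ_four, Matrix.cons_val_zero, Matrix.cons_val_one,
    Matrix.cons_val_two, Matrix.cons_val_three, Matrix.head_cons, Matrix.tail_cons]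
  have h₁ := hW ε
  have h₂ := hW (2 * ε)
  have h₃ := hW (3 * ε)
  -- `ring_nf` brings each difference `pᵢ - pⱼ` with `i < j` to the normal form of `-(k * ε)`
  ring_nf at h₁ h₂ h₃ ⊢
  rw [h₁, h₂, h₃]
  ring

theorem wa2_even (a : ℝ) : Function.Even (Wa2 a) := fun x => by
  simp only [Wa2, abs_neg]

theorem six_mul_two_rpow_sub_three_rpow_strictAntiOn :
    StrictAntiOn (fun x : ℝ => (6 : ℝ) * 2 ^ x - 3 ^ x) (Set.Ici 4) := by
  have hderiv : ∀ x : ℝ,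
      HasDerivAt (fun x : ℝ => (6 : ℝ) * 2 ^ x - 3 ^ x)
        (6 * (2 ^ x * Real.log 2) - 3 ^ x * Real.log 3) x :=
    fun x => (((Real.hasStrictDerivAt_const_rpow two_pos x).hasDerivAt.const_mul 6).sub
      (Real.hasStrictDerivAt_const_rpow three_pos x).hasDerivAt)
  refine strictAntiOn_of_deriv_neg (convex_Ici 4)
    (fun x _ => (hderiv x).continuousAt.continuousWithinAt) fun x hx => ?_
  rw [interior_Ici, Set.mem_Ioi] at hx
  rw [(hderiv x).deriv]
  have hlog : 6 * Real.log 2 < 5 * Real.log 3 := by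
    rw [← Real.log_rpow two_pos, ← Real.log_rpow three_pos]
    exact Real.log_lt_log (by positivity) (by norm_num)
  have hratio : (5 : ℝ) < (3 / 2) ^ x := calc
    (5 : ℝ) < (3 / 2) ^ (4 : ℝ) := by norm_num
    _ < (3 / 2) ^ x := Real.rpow_lt_rpow_of_exponent_lt (by norm_num) hx
  have hsplit : (3 : ℝ) ^ x = (3 / 2) ^ x * 2 ^ x := by
    rw [← Real.mul_rpow (by norm_num) (by norm_num)]; norm_num
  have h2 : (0 : ℝ) < 2 ^ x := by positivity
  have hlog3 : 0 < Real.log 3 := Real.log_pos (by norm_num)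
  rw [hsplit]
  nlinarith [mul_lt_mul_of_pos_right hratio (mul_pos h2 hlog3)]

theorem six_mul_two_rpow_sub_three_rpow_lt {a : ℝ} (ha : 4 < a) :
    6 * 2 ^ a - 3 ^ a < (15 : ℝ) := by
  have h := six_mul_two_rpow_sub_three_rpow_strictAntiOn Set.self_mem_Ici ha.le ha
  norm_num at h
  exact h

theorem diracEnergy_wa2_fourth_difference {a ε : ℝ} (ha : a ≠ 0) (hε : 0 ≤ ε) :
    diracEnergy (Wa2 a) ![1, -3, 3, -1] ![0, ε, 2 * ε, 3 * ε]
      = ε ^ a / a * (-15 + 6 * 2 ^ a - 3 ^ a) := by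
  rw [diracEnergy_fourth_difference (wa2_even a)]
  simp only [Wa2, abs_zero, abs_of_nonneg hε, abs_of_nonneg (by positivity : 0 ≤ 2 * ε),
    abs_of_nonneg (by positivity : 0 ≤ 3 * ε), Real.zero_rpow ha, Real.zero_rpow two_ne_zero,
    Real.mul_rpow (by norm_num : (0:ℝ) ≤ 2) hε, Real.mul_rpow (by norm_num : (0:ℝ) ≤ 3) hε,
    Real.rpow_two]
  ring

/-- For the signed measure `μ = δ_0 - 3δ_ε + 3δ_{2ε} - δ_{3ε}` and the potential
`W_{a,2}`, the interaction energy equals `(ε^a/a)(-15 + 6·2^a - 3^a)`; for `a > 4` this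
quantity is negative, and it vanishes for `a = 4`. -/
theorem dirac_quadruple_energy :
    (∀ a : ℝ, 4 < a → ∀ ε : ℝ, 0 < ε →
      diracEnergy (Wa2 a) ![1, -3, 3, -1] ![0, ε, 2 * ε, 3 * ε]
          = ε ^ a / a * (-15 + 6 * 2 ^ a - 3 ^ a) ∧
        diracEnergy (Wa2 a) ![1, -3, 3, -1] ![0, ε, 2 * ε, 3 * ε] < 0) ∧
    (∀ ε : ℝ, 0 < ε →
      diracEnergy (Wa2 4) ![1, -3, 3, -1] ![0, ε, 2 * ε, 3 * ε] = 0) := by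
  refine ⟨fun a ha ε hε => ?_, fun ε hε => ?_⟩
  · have ha₀ : 0 < a := by linarith
    have henergy := diracEnergy_wa2_fourth_difference ha₀.ne' hε.le
    refine ⟨henergy, henergy ▸ mul_neg_of_pos_of_neg (by positivity) ?_⟩
    linarith [six_mul_two_rpow_sub_three_rpow_lt ha]
  · rw [diracEnergy_wa2_fourth_difference four_ne_zero hε.le]
    norm_num

end
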